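/- arXiv:1307.4847 — 2 statements merged into one kernel-verified Lean document; each statement's English description precedes it below -/
import Mathlib

section
/- If Q is the linear span of K functions phi_1, ..., phi_K from Z to the reals, then the eluder dimension of Q is at most K. -/
/-- `z` is independent of `Z'` with respect to the function class `Q`:
there exist two functions in `Q` agreeing on `Z'` but differing at `z`. -/
def IsIndep {Z : Type*} (Q : Set (Z → ℝ)) (z : Z) (Z' : Set Z) : Prop :=
  ∃ f ∈ Q, ∃ g ∈ Q, (∀ w ∈ Z', f w = g w) ∧ f z ≠ g z

/-- A list of elements of `Z` such that every element is independent of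
its predecessors with respect to `Q`. -/
def EluderSeq {Z : Type*} (Q : Set (Z → ℝ)) (l : List Z) : Prop :=
  ∀ i : Fin l.length,
    IsIndep Q (l.get i) {w | ∃ j : Fin l.length, j < i ∧ l.get j = w}

/-- The eluder dimension of `Q`: the length of the longest sequence of
elements of `Z` each independent of its predecessors. -/
noncomputable def eluderDim {Z : Type*} (Q : Set (Z → ℝ)) : ℕ∞ :=
  sSup ((fun l : List Z => (l.length : ℕ∞)) '' {l | EluderSeq Q l})

/-!
For a linear space `Q` of functions, `z` is independent of `Z'` exactly when some `h ∈ Q`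
vanishes on `Z'` but not at `z`; hence the evaluation functional at `z` on `Q` is not in the
span of the evaluation functionals at the points of `Z'`. Along an eluder sequence the
evaluation functionals are therefore linearly independent in the dual of `Q`, so there are at
most `dim Q ≤ K` of them.
-/

open Module Submodule

theorem linearIndependent_of_forall_notMem_span_image_Iio {K V : Type*} [DivisionRing K]
    [AddCommGroup V] [Module K V] {n : ℕ} {v : Fin n → V}
    (hv : ∀ i, v i ∉ span K (v '' Set.Iio i)) : LinearIndependent K v := by
  induction n with
  | zero => exact linearIndependent_empty_type
  | succ n ih =>
    rw [← Fin.snoc_init_self v, linearIndependent_finSnoc]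
    refine ⟨ih fun i hi => hv i.castSucc (span_mono ?_ hi), fun h => hv (Fin.last n) ?_⟩
    · rintro _ ⟨j, hj, rfl⟩
      exact ⟨j.castSucc, Fin.castSucc_lt_castSucc_iff.2 hj, rfl⟩
    · refine span_mono ?_ h
      rintro _ ⟨j, rfl⟩
      exact ⟨j.castSucc, j.castSucc_lt_last, rfl⟩

section Eluder

variable {Z : Type*} (Q : Submodule ℝ (Z → ℝ))

def evalOn (z : Z) : Dual ℝ Q :=
  (LinearMap.proj z).comp Q.subtype

theorem IsIndep.evalOn_notMem_span {z : Z} {Z' : Set Z} (h : IsIndep (Q : Set (Z → ℝ)) z Z') :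
    evalOn Q z ∉ span ℝ (evalOn Q '' Z') := by
  obtain ⟨f, hf, g, hg, hagree, hne⟩ := h
  let d : Q := ⟨f - g, sub_mem hf hg⟩
  have hker : span ℝ (evalOn Q '' Z') ≤ LinearMap.ker (Dual.eval ℝ Q d) := by
    rw [span_le]
    rintro _ ⟨w, hw, rfl⟩
    simp [d, evalOn, hagree w hw]
  intro hz
  exact hne (sub_eq_zero.1 (hker hz))

theorem EluderSeq.linearIndependent_evalOn {l : List Z} (hl : EluderSeq (Q : Set (Z → ℝ)) l) :
    LinearIndependent ℝ fun i => evalOn Q (l.get i) :=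
  linearIndependent_of_forall_notMem_span_image_Iio fun i => by
    rw [← Set.image_image (evalOn Q) l.get]
    exact (hl i).evalOn_notMem_span Q

theorem EluderSeq.length_le_finrank [FiniteDimensional ℝ Q] {l : List Z}
    (hl : EluderSeq (Q : Set (Z → ℝ)) l) : l.length ≤ finrank ℝ Q := by
  simpa only [Fintype.card_fin, Subspace.dual_finrank_eq] using
    (hl.linearIndependent_evalOn Q).fintype_card_le_finrank

theorem eluderDim_le_finrank [FiniteDimensional ℝ Q] :
    eluderDim (Q : Set (Z → ℝ)) ≤ finrank ℝ Q := by
  refine sSup_le ?_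
  rintro _ ⟨l, hl, rfl⟩
  exact Nat.cast_le.2 (hl.length_le_finrank Q)

end Eluder

theorem eluderDim_span_le {Z : Type*} (K : ℕ) (φ : Fin K → Z → ℝ) :
    eluderDim ((Submodule.span ℝ (Set.range φ) : Submodule ℝ (Z → ℝ)) : Set (Z → ℝ))
      ≤ (K : ℕ∞) := by
  have := FiniteDimensional.span_of_finite ℝ (Set.finite_range φ)
  calc eluderDim ((span ℝ (Set.range φ) : Submodule ℝ (Z → ℝ)) : Set (Z → ℝ))
      ≤ finrank ℝ (span ℝ (Set.range φ)) := eluderDim_le_finrank _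
    _ ≤ K := Nat.cast_le.2 ((finrank_range_le_card φ).trans_eq (Fintype.card_fin K))
end

section
/- Let Phi be an N-by-K real matrix and let Q0 = { Phi theta : theta in R^K, ||theta||_0 <= K0 } be the set of sparse linear combinations, viewed as real-valued functions on {1,...,N}. If 2*K0 <= K, then the eluder dimension of Q0 equals the (2K0)-rank of Phi, defined as the length of the longest sequence of rows of Phi such that every row is linearly 2K0-independent of its predecessors. -/
/-- The class of functions on `Fin N` given by `K0`-sparse linear combinations
of the columns of `Φ`, i.e. `y ↦ Φ(y)ᵀ θ` with `‖θ‖₀ ≤ K0`. -/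
def SparseClass {N K : ℕ} (Φ : Matrix (Fin N) (Fin K) ℝ) (K0 : ℕ) :
    Set (Fin N → ℝ) :=
  {f | ∃ θ : Fin K → ℝ,
    (Finset.univ.filter fun i => θ i ≠ 0).card ≤ K0 ∧
    f = fun y => ∑ i, Φ y i * θ i}

/-- `v` is linearly `l`-independent of the set of vectors `S`: there is an index
set `I` of cardinality `l` such that the restriction of `v` to `I` is not in the
span of the restrictions of the elements of `S` to `I`. -/
def LinLIndepOf {K : ℕ} (l : ℕ) (v : Fin K → ℝ) (S : Set (Fin K → ℝ)) : Prop :=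
  ∃ I : Finset (Fin K), I.card = l ∧
    (fun i : {x // x ∈ I} => v i.1) ∉
      Submodule.span ℝ ((fun w : Fin K → ℝ => fun i : {x // x ∈ I} => w i.1) '' S)

/-- A sequence (list) of rows of `Φ` such that every row is linearly
`l`-independent of its predecessors. -/
def LRankSeq {N K : ℕ} (Φ : Matrix (Fin N) (Fin K) ℝ) (l : ℕ)
    (s : List (Fin N)) : Prop :=
  ∀ i : Fin s.length,
    LinLIndepOf l (Φ (s.get i)) {w | ∃ j : Fin s.length, j < i ∧ w = Φ (s.get j)}

/-- The `l`-rank of `Φ`: the length of the longest sequence of rows of `Φ`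
such that every element is linearly `l`-independent of its predecessors. -/
noncomputable def lRank {N K : ℕ} (Φ : Matrix (Fin N) (Fin K) ℝ) (l : ℕ) : ℕ∞ :=
  sSup ((fun s : List (Fin N) => (s.length : ℕ∞)) '' {s | LRankSeq Φ l s})

/-!
Two `K0`-sparse functions `Φθ₁` and `Φθ₂` agree on `Z'` but differ at `z` exactly when
`θ = θ₁ - θ₂` is orthogonal to the rows `Φ w`, `w ∈ Z'`, but not to `Φ z`; such differences
are exactly the `2K0`-sparse vectors. On the other hand, by duality in `ℝ^I`, the restriction
`(Φ z)_I` lies outside the span of the `(Φ w)_I` iff some `θ` supported on `I` separates them in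
this way, and when `2K0 ≤ K` every `2K0`-sparse `θ` is supported on some `I` with `|I| = 2K0`.
So the sequences defining the eluder dimension of the sparse class and the `2K0`-rank coincide.
-/

open Matrix Finset

theorem mem_span_iff_forall_dotProduct_eq_zero {𝕜 ι : Type*} [Field 𝕜] [Fintype ι]
    {u : ι → 𝕜} {T : Set (ι → 𝕜)} :
    u ∈ Submodule.span 𝕜 T ↔ ∀ c : ι → 𝕜, (∀ t ∈ T, t ⬝ᵥ c = 0) → u ⬝ᵥ c = 0 := by
  classical
  rw [← Subspace.forall_mem_dualAnnihilator_apply_eq_zero_iff,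
    (dotProductEquiv 𝕜 ι).surjective.forall]
  refine forall_congr' fun c => ?_
  have hspan : (∀ w ∈ Submodule.span 𝕜 T, c ⬝ᵥ w = 0) ↔ ∀ t ∈ T, c ⬝ᵥ t = 0 :=
    ⟨fun h t ht => h t (Submodule.subset_span ht),
      fun h => Submodule.span_le (p := LinearMap.ker (dotProductEquiv 𝕜 ι c)).2 h⟩
  simp only [Submodule.mem_dualAnnihilator, dotProductEquiv_apply_apply, hspan]
  simp only [dotProduct_comm c]

theorem dotProduct_restrict_of_forall_notMem_eq_zero {α ι : Type*}
    [NonUnitalNonAssocSemiring α] [Fintype ι] {I : Finset ι} {θ : ι → α}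
    (hθ : ∀ i ∉ I, θ i = 0) (w : ι → α) :
    (fun i : I => w i) ⬝ᵥ (fun i : I => θ i) = w ⬝ᵥ θ := by
  rw [dotProduct, sum_coe_sort I (fun i => w i * θ i)]
  exact sum_subset (subset_univ I) fun i _ hi => by rw [hθ i hi, mul_zero]

theorem linLIndepOf_iff_exists_finset {K l : ℕ} {v : Fin K → ℝ} {S : Set (Fin K → ℝ)} :
    LinLIndepOf l v S ↔ ∃ I : Finset (Fin K), #I = l ∧
      ∃ θ : Fin K → ℝ, (∀ i ∉ I, θ i = 0) ∧ (∀ w ∈ S, w ⬝ᵥ θ = 0) ∧ v ⬝ᵥ θ ≠ 0 := by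
  refine exists_congr fun I => and_congr_right fun _ => ?_
  rw [mem_span_iff_forall_dotProduct_eq_zero]
  push Not
  simp only [Set.forall_mem_image]
  constructor
  · rintro ⟨c, hS, hv⟩
    let θ : Fin K → ℝ := fun i => if h : i ∈ I then c ⟨i, h⟩ else 0
    have hθ : ∀ i ∉ I, θ i = 0 := fun i hi => dif_neg hi
    have hc : (fun i : I => θ i) = c := funext fun i => dif_pos i.2
    refine ⟨θ, hθ, fun w hw => ?_, ?_⟩
    · rw [← dotProduct_restrict_of_forall_notMem_eq_zero hθ, hc, hS hw]
    · rwa [← dotProduct_restrict_of_forall_notMem_eq_zero hθ, hc]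
  · rintro ⟨θ, hθ, hS, hv⟩
    refine ⟨fun i => θ i, fun w hw => ?_, ?_⟩
    · rw [dotProduct_restrict_of_forall_notMem_eq_zero hθ, hS w hw]
    · rwa [dotProduct_restrict_of_forall_notMem_eq_zero hθ]

theorem exists_finset_card_eq_and_iff_exists_card_support_le {ι M : Type*} [Fintype ι]
    [Zero M] [DecidableEq M] {l : ℕ} (hl : l ≤ Fintype.card ι) (P : (ι → M) → Prop) :
    (∃ I : Finset ι, #I = l ∧ ∃ θ : ι → M, (∀ i ∉ I, θ i = 0) ∧ P θ) ↔
      ∃ θ : ι → M, #{i | θ i ≠ 0} ≤ l ∧ P θ := by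
  constructor
  · rintro ⟨I, rfl, θ, hθ, hP⟩
    refine ⟨θ, card_le_card fun i hi => ?_, hP⟩
    by_contra hiI
    exact (mem_filter.1 hi).2 (hθ i hiI)
  · rintro ⟨θ, hθ, hP⟩
    obtain ⟨I, hsupp, -, rfl⟩ := exists_subsuperset_card_eq (subset_univ _) hθ (by simpa using hl)
    refine ⟨I, rfl, θ, fun i hiI => ?_, hP⟩
    by_contra hi
    exact hiI (hsupp (by simpa using hi))

theorem linLIndepOf_iff_exists_sparse {K l : ℕ} (hl : l ≤ K) {v : Fin K → ℝ}
    {S : Set (Fin K → ℝ)} :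
    LinLIndepOf l v S ↔ ∃ θ : Fin K → ℝ, #{i | θ i ≠ 0} ≤ l ∧
      (∀ w ∈ S, w ⬝ᵥ θ = 0) ∧ v ⬝ᵥ θ ≠ 0 :=
  linLIndepOf_iff_exists_finset.trans
    (exists_finset_card_eq_and_iff_exists_card_support_le (by simpa using hl) _)

theorem card_support_sub_le {ι G : Type*} [Fintype ι] [AddGroup G] [DecidableEq G]
    (θ₁ θ₂ : ι → G) :
    #{i | θ₁ i - θ₂ i ≠ 0} ≤ #{i | θ₁ i ≠ 0} + #{i | θ₂ i ≠ 0} := by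
  classical
  refine (card_le_card fun i hi => ?_).trans (card_union_le _ _)
  simp only [mem_filter, mem_union, mem_univ, true_and] at hi ⊢
  by_contra! h
  exact hi (by rw [h.1, h.2, sub_zero])

theorem exists_sub_eq_of_card_support_le_add {ι G : Type*} [Fintype ι] [AddGroup G]
    [DecidableEq G] {a b : ℕ} {θ : ι → G} (h : #{i | θ i ≠ 0} ≤ a + b) :
    ∃ θ₁ θ₂ : ι → G, #{i | θ₁ i ≠ 0} ≤ a ∧ #{i | θ₂ i ≠ 0} ≤ b ∧ θ₁ - θ₂ = θ := by
  classical
  set s : Finset ι := {i | θ i ≠ 0}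
  obtain ⟨I, hIs, hI⟩ := exists_subset_card_eq (min_le_right a #s)
  refine ⟨fun i => if i ∈ I then θ i else 0, fun i => if i ∈ I then 0 else -θ i, ?_, ?_, ?_⟩
  · refine (card_le_card fun i hi => ?_).trans (hI.trans_le (min_le_left a #s))
    by_contra hiI
    simp [hiI] at hi
  · refine (card_le_card (t := s \ I) fun i hi => ?_).trans ?_
    · by_cases hiI : i ∈ I <;> simp_all [s]
    · rw [card_sdiff_of_subset hIs, hI]
      omega
  · funext i
    by_cases hiI : i ∈ I <;> simp [hiI]

theorem isIndep_sparseClass_iff_exists_sparse {N K K0 : ℕ} (Φ : Matrix (Fin N) (Fin K) ℝ)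
    (z : Fin N) (Z' : Set (Fin N)) :
    IsIndep (SparseClass Φ K0) z Z' ↔ ∃ θ : Fin K → ℝ, #{i | θ i ≠ 0} ≤ 2 * K0 ∧
      (∀ w ∈ Z', Φ w ⬝ᵥ θ = 0) ∧ Φ z ⬝ᵥ θ ≠ 0 := by
  constructor
  · rintro ⟨_, ⟨θ₁, h₁, rfl⟩, _, ⟨θ₂, h₂, rfl⟩, hZ', hz⟩
    refine ⟨θ₁ - θ₂, (card_support_sub_le θ₁ θ₂).trans (by omega), fun w hw => ?_, ?_⟩
    · rw [dotProduct_sub, sub_eq_zero]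
      exact hZ' w hw
    · rw [dotProduct_sub, sub_ne_zero]
      exact hz
  · rintro ⟨θ, hθ, hZ', hz⟩
    obtain ⟨θ₁, θ₂, h₁, h₂, rfl⟩ := exists_sub_eq_of_card_support_le_add (hθ.trans_eq (two_mul K0))
    refine ⟨_, ⟨θ₁, h₁, rfl⟩, _, ⟨θ₂, h₂, rfl⟩, fun w hw => ?_, ?_⟩
    · rw [← sub_eq_zero]
      exact (dotProduct_sub _ _ _).symm.trans (hZ' w hw)
    · rw [← sub_ne_zero]
      exact (dotProduct_sub _ _ _).symm.trans_ne hz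

theorem eluderSeq_sparseClass_iff_lRankSeq {N K K0 : ℕ} (Φ : Matrix (Fin N) (Fin K) ℝ)
    (h : 2 * K0 ≤ K) (s : List (Fin N)) :
    EluderSeq (SparseClass Φ K0) s ↔ LRankSeq Φ (2 * K0) s := by
  refine forall_congr' fun i => ?_
  rw [isIndep_sparseClass_iff_exists_sparse, linLIndepOf_iff_exists_sparse h]
  simp only [Set.mem_ofPred_eq, forall_exists_index, and_imp, forall_apply_eq_imp_iff₂,
    @forall_comm (Fin K → ℝ), forall_eq]

theorem eluderDim_sparseClass_eq_lRank {N K K0 : ℕ}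
    (Φ : Matrix (Fin N) (Fin K) ℝ) (h : 2 * K0 ≤ K) :
    eluderDim (SparseClass Φ K0) = lRank Φ (2 * K0) := by
  simp only [eluderDim, lRank, eluderSeq_sparseClass_iff_lRankSeq Φ h]
end
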